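/- arXiv:math/0502478 — 2 statements merged into one kernel-verified Lean document; each statement's English description precedes it below -/
import Mathlib

section
/- Let q = q₀ ⊕ q₁ be a finite-dimensional ℤ₂-graded Lie algebra over a field k of characteristic zero (so [q₀,q₀] ⊆ q₀, [q₀,q₁] ⊆ q₁, [q₁,q₁] ⊆ q₀), and let ξ ∈ q* be a linear functional with ξ(q₀) = 0. Then the coadjoint stabiliser q_ξ := {s ∈ q : ξ([s,y]) = 0 for all y ∈ q} is graded, i.e., q_ξ = (q_ξ ∩ q₀) ⊕ (q_ξ ∩ q₁), and dim q₀ − dim q₁ = dim(q_ξ ∩ q₀) − dim(q_ξ ∩ q₁). -/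
/-!
For a ℤ₂-graded Lie algebra `q = q₀ ⊕ q₁` and `ξ ∈ q*` vanishing on `q₀`, the coadjoint
stabiliser `q_ξ` is graded and `dim q₀ − dim q₁ = dim(q_ξ ∩ q₀) − dim(q_ξ ∩ q₁)`.
-/

open Module

namespace Stmt

variable (k : Type*) [Field k] (L : Type*) [LieRing L] [LieAlgebra k L]

/-- The stabiliser `q_ξ = {s ∈ q : ξ([s,y]) = 0 for all y ∈ q}` of `ξ ∈ q*` under the
coadjoint action. -/
def coadjStab (ξ : Module.Dual k L) : Submodule k L where
  carrier := {s | ∀ y : L, ξ ⁅s, y⁆ = 0}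
  add_mem' := by intro a b ha hb y; rw [add_lie, map_add, ha y, hb y, add_zero]
  zero_mem' := by intro y; simp
  smul_mem' := by intro c a ha y; rw [smul_lie, map_smul, ha y, smul_zero]

/-- The rank of a bilinear pairing equals the rank of its flip. -/
lemma finrank_range_flip {K V W : Type*} [Field K] [AddCommGroup V] [Module K V]
    [AddCommGroup W] [Module K W] [FiniteDimensional K W]
    (f : V →ₗ[K] Module.Dual K W) :
    finrank K (LinearMap.range f.flip) = finrank K (LinearMap.range f) := by
  have h : f.flip = f.dualMap.comp (Module.Dual.eval K W) := by ext; rfl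
  rw [h, LinearMap.range_comp,
    LinearMap.range_eq_top.mpr (Module.bijective_dual_eval K W).surjective,
    Submodule.map_top, LinearMap.finrank_range_dualMap_eq_finrank_range]

theorem coadjStab_graded [CharZero k] [FiniteDimensional k L]
    (q0 q1 : Submodule k L) (hd : IsCompl q0 q1)
    (h00 : ∀ x ∈ q0, ∀ y ∈ q0, ⁅x, y⁆ ∈ q0)
    (h01 : ∀ x ∈ q0, ∀ y ∈ q1, ⁅x, y⁆ ∈ q1)
    (h11 : ∀ x ∈ q1, ∀ y ∈ q1, ⁅x, y⁆ ∈ q0)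
    (ξ : Module.Dual k L) (hξ : ∀ x ∈ q0, ξ x = 0) :
    coadjStab k L ξ = (coadjStab k L ξ ⊓ q0) ⊔ (coadjStab k L ξ ⊓ q1) ∧
    (finrank k q0 : ℤ) - finrank k q1 =
      (finrank k ↥(coadjStab k L ξ ⊓ q0) : ℤ) - finrank k ↥(coadjStab k L ξ ⊓ q1) := by
  set S := coadjStab k L ξ with hS
  have hdec : ∀ y : L, ∃ y0 ∈ q0, ∃ y1 ∈ q1, y = y0 + y1 := by
    intro y
    have : y ∈ q0 ⊔ q1 := by rw [hd.sup_eq_top]; trivial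
    obtain ⟨y0, h0, y1, h1, rfl⟩ := Submodule.mem_sup.mp this
    exact ⟨y0, h0, y1, h1, rfl⟩
  -- membership criteria for the two pieces
  have hs0 : ∀ s0 ∈ q0, (∀ y1 ∈ q1, ξ ⁅s0, y1⁆ = 0) → s0 ∈ S := by
    intro s0 hs0 h y
    obtain ⟨y0, hy0, y1, hy1, rfl⟩ := hdec y
    rw [lie_add, map_add, hξ _ (h00 _ hs0 _ hy0), h _ hy1, add_zero]
  have hs1 : ∀ s1 ∈ q1, (∀ y0 ∈ q0, ξ ⁅s1, y0⁆ = 0) → s1 ∈ S := by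
    intro s1 hs1 h y
    obtain ⟨y0, hy0, y1, hy1, rfl⟩ := hdec y
    rw [lie_add, map_add, h _ hy0, hξ _ (h11 _ hs1 _ hy1), add_zero]
  -- Part 1: gradedness
  have part1 : S = (S ⊓ q0) ⊔ (S ⊓ q1) := by
    refine le_antisymm ?_ (sup_le inf_le_left inf_le_left)
    intro s hs
    obtain ⟨s0, hq0, s1, hq1, rfl⟩ := hdec s
    have hs0S : s0 ∈ S := by
      refine hs0 _ hq0 fun y1 hy1 => ?_
      have h1 : ξ ⁅s0 + s1, y1⁆ = 0 := hs y1
      have h2 : ξ ⁅s1, y1⁆ = 0 := hξ _ (h11 _ hq1 _ hy1)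
      rw [add_lie, map_add, h2, add_zero] at h1
      exact h1
    have hs1S : s1 ∈ S := by
      have : (s0 + s1) - s0 ∈ S := S.sub_mem hs hs0S
      simpa using this
    exact Submodule.mem_sup.mpr ⟨s0, ⟨hs0S, hq0⟩, s1, ⟨hs1S, hq1⟩, rfl⟩
  refine ⟨part1, ?_⟩
  -- Part 2: dimension count via the pairing q0 × q1 → k
  let B : L →ₗ[k] L →ₗ[k] k :=
    LinearMap.mk₂ k (fun x y => ξ ⁅x, y⁆)
      (fun x x' y => by simp [add_lie])
      (fun c x y => by simp [smul_lie])
      (fun x y y' => by simp [lie_add])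
      (fun c x y => by simp [lie_smul])
  let f : q0 →ₗ[k] Module.Dual k q1 := B.domRestrict₁₂ q0 q1
  have hker0 : LinearMap.ker f = (S ⊓ q0).comap q0.subtype := by
    ext x
    simp only [LinearMap.mem_ker, Submodule.mem_comap, Submodule.mem_inf,
      Submodule.coe_subtype, LinearMap.ext_iff]
    constructor
    · intro h
      exact ⟨hs0 _ x.2 fun y1 hy1 => h ⟨y1, hy1⟩, x.2⟩
    · intro h y
      exact h.1 y
  have hker1 : LinearMap.ker f.flip = (S ⊓ q1).comap q1.subtype := by
    ext y
    simp only [LinearMap.mem_ker, Submodule.mem_comap, Submodule.mem_inf,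
      Submodule.coe_subtype, LinearMap.ext_iff]
    constructor
    · intro h
      refine ⟨hs1 _ y.2 fun x0 hx0 => ?_, y.2⟩
      have := h ⟨x0, hx0⟩
      have h2 : ξ ⁅(x0 : L), (y : L)⁆ = 0 := this
      have h3 : ξ ⁅(y : L), x0⁆ = - ξ ⁅(x0 : L), (y : L)⁆ := by
        rw [← map_neg, lie_skew]
      rw [h3, h2, neg_zero]
    · intro h x
      have h2 : ξ ⁅(y : L), (x : L)⁆ = 0 := h.1 x
      have h3 : ξ ⁅(x : L), (y : L)⁆ = - ξ ⁅(y : L), (x : L)⁆ := by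
        rw [← map_neg, lie_skew]
      show ξ ⁅(x : L), (y : L)⁆ = 0
      rw [h3, h2, neg_zero]
  have e0 : finrank k (LinearMap.ker f) = finrank k ↥(S ⊓ q0) := by
    rw [hker0]; exact (Submodule.comapSubtypeEquivOfLe inf_le_right).finrank_eq
  have e1 : finrank k (LinearMap.ker f.flip) = finrank k ↥(S ⊓ q1) := by
    rw [hker1]; exact (Submodule.comapSubtypeEquivOfLe inf_le_right).finrank_eq
  have rn0 : finrank k (LinearMap.range f) + finrank k (LinearMap.ker f) = finrank k q0 :=
    LinearMap.finrank_range_add_finrank_ker f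
  have rn1 : finrank k (LinearMap.range f.flip) + finrank k (LinearMap.ker f.flip)
      = finrank k q1 := LinearMap.finrank_range_add_finrank_ker f.flip
  have hr : finrank k (LinearMap.range f.flip) = finrank k (LinearMap.range f) :=
    finrank_range_flip f
  rw [e0] at rn0
  rw [e1, hr] at rn1
  omega

end Stmt
end

section
/- Let k be an algebraically closed field of characteristic zero, V a finite-dimensional k-vector space with a nondegenerate alternating bilinear form B (so B(w,v) = −B(v,w)), and e ∈ End(V) a nilpotent endomorphism satisfying B(e·v, w) = B(v, e·w) for all v,w ∈ V. Set m := dim Ker(e). Then there exist vectors w₁,…,w_m ∈ V and integers d₁,…,d_m ≥ 0 such that e^{d_i+1}·w_i = 0, the vectors {e^s·w_i : 1 ≤ i ≤ m, 0 ≤ s ≤ d_i} form a basis of V, and there is a fixed-point-free involution i ↦ i* of {1,…,m} such that d_i = d_{i*} and B(w_i, e^s·w_j) ≠ 0 only if (j,s) = (i*, d_i); moreover B(w_i, e^{d_i}·w_{i*}) ≠ 0. -/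
/-!
Let `W` be an `e`-stable subspace on which `B` is nondegenerate, and let `d + 1` be the order of
nilpotency of `e` on `W`. Pick `w ∈ W` with `e^d w ≠ 0` and `u ∈ W` with `B u (e^d w) ≠ 0`;
correcting `u` by a polynomial in `e` gives `x ∈ W` with `B x (e^s w) = δ_{s,d}`. Since `B` is
alternating, `e` is self-adjoint and `2 ≠ 0`, `B v (e^s v) = 0` for all `v`, so the two strings
`e^s x`, `e^s w` span an `e`-stable subspace `U` on which `B` is nondegenerate. Its orthogonal
complement in `W` is again `e`-stable and nondegenerate, and one inducts on the dimension.

In an adapted family the string vector `e^s (w i)` pairs nontrivially only with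
`e^(d i - s) (w i*)`. This duality gives linear independence and nondegeneracy of the span, and
shows that `ker e` is spanned by the tops `e^(d i) (w i)` of the strings, so there are
`dim ker e` strings.
-/

open Module

section AdaptedCyclic

open Submodule
open LinearMap (BilinForm IsAdjointPair)

variable {k V : Type*} [Field k] [AddCommGroup V] [Module k V] {B : BilinForm k V}
  {e : Module.End k V}

theorem LinearMap.IsAdjointPair.pow (he : IsAdjointPair B B e e) (n : ℕ) :
    IsAdjointPair B B ⇑(e ^ n) ⇑(e ^ n) := by
  induction n with
  | zero => simpa using LinearMap.isAdjointPair_one (B := B)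
  | succ n ih => simpa only [← pow_succ, ← pow_succ'] using ih.mul he

theorem pow_apply_mem_of_mem_invtSubmodule {W : Submodule k V} (hW : W ∈ e.invtSubmodule)
    (n : ℕ) {v : V} (hv : v ∈ W) : (e ^ n) v ∈ W := by
  induction n with
  | zero => simpa using hv
  | succ n ih => rw [pow_succ', Module.End.mul_apply]; exact hW ih

theorem pow_apply_eq_zero_of_lt {d n : ℕ} {v : V} (hv : (e ^ (d + 1)) v = 0) (hn : d < n) :
    (e ^ n) v = 0 := by
  obtain ⟨m, rfl⟩ := Nat.exists_eq_add_of_lt hn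
  rw [show d + m + 1 = m + (d + 1) by ring, pow_add, Module.End.mul_apply, hv, map_zero]

theorem exists_pow_apply_ne_zero_of_ne_bot (hnil : IsNilpotent e) {W : Submodule k V}
    (hW : W ≠ ⊥) : ∃ d, (∃ w ∈ W, (e ^ d) w ≠ 0) ∧ ∀ v ∈ W, (e ^ (d + 1)) v = 0 := by
  classical
  have hex : ∃ n, ∀ v ∈ W, (e ^ n) v = 0 := by
    obtain ⟨n, hn⟩ := hnil
    exact ⟨n, fun v _ => by rw [hn, LinearMap.zero_apply]⟩
  have hpos : Nat.find hex ≠ 0 := by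
    intro h
    have h0 := Nat.find_spec hex
    rw [h] at h0
    exact hW ((Submodule.eq_bot_iff W).2 fun v hv => by simpa using h0 v hv)
  obtain ⟨d, hd⟩ : ∃ d, Nat.find hex = d + 1 := Nat.exists_eq_succ_of_ne_zero hpos
  refine ⟨d, ?_, hd ▸ Nat.find_spec hex⟩
  by_contra! h
  exact Nat.find_min hex (by omega : d < Nat.find hex) h

theorem apply_pow_self_eq_zero [NeZero (2 : k)] (hB : ∀ v w, B w v = -B v w)
    (he : IsAdjointPair B B e e) (s : ℕ) (v : V) : B v ((e ^ s) v) = 0 := by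
  have h := hB v ((e ^ s) v)
  rw [he.pow] at h
  have h2 : (2 : k) * B v ((e ^ s) v) = 0 := by linear_combination h
  exact (mul_eq_zero.1 h2).resolve_left two_ne_zero

theorem apply_pow_swap (hB : ∀ v w, B w v = -B v w) (he : IsAdjointPair B B e e) (s : ℕ)
    (v w : V) : B w ((e ^ s) v) = -B v ((e ^ s) w) := by
  rw [← he.pow s, hB]

/-- `x` is `q(e) u` for the inverse `q` of the power series `∑ r, B u (e^(d-r) w) X^r`. -/
theorem exists_mem_apply_pow_eq_ite (he : IsAdjointPair B B e e) {W : Submodule k V}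
    (hW : W ∈ e.invtSubmodule) {d : ℕ} {u w : V} (hu : u ∈ W) (hw : (e ^ (d + 1)) w = 0)
    (huw : B u ((e ^ d) w) ≠ 0) :
    ∃ x ∈ W, ∀ s, B x ((e ^ s) w) = if s = d then 1 else 0 := by
  set α : PowerSeries k := PowerSeries.mk fun r => B u ((e ^ (d - r)) w)
  have hα : α⁻¹ * α = 1 := PowerSeries.inv_mul_cancel α (by simpa [α] using huw)
  refine ⟨∑ t ∈ Finset.range (d + 1), PowerSeries.coeff t α⁻¹ • (e ^ t) u,
    sum_mem fun t _ => smul_mem _ _ (pow_apply_mem_of_mem_invtSubmodule hW t hu), fun s => ?_⟩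
  have hsum : B (∑ t ∈ Finset.range (d + 1), PowerSeries.coeff t α⁻¹ • (e ^ t) u) ((e ^ s) w) =
      ∑ t ∈ Finset.range (d + 1), PowerSeries.coeff t α⁻¹ * B u ((e ^ (t + s)) w) := by
    simp only [map_sum, map_smul, LinearMap.smul_apply, smul_eq_mul, LinearMap.sum_apply]
    exact Finset.sum_congr rfl fun t _ => by rw [he.pow, pow_add, Module.End.mul_apply]
  rw [hsum]
  rcases lt_or_ge d s with hds | hsd
  · rw [if_neg hds.ne', Finset.sum_eq_zero fun t _ => by
      rw [pow_apply_eq_zero_of_lt hw (by omega), map_zero, mul_zero]]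
  obtain ⟨r, rfl⟩ := Nat.exists_eq_add_of_le hsd
  have hcoeff := congrArg (PowerSeries.coeff r) hα
  rw [PowerSeries.coeff_mul, Finset.Nat.sum_antidiagonal_eq_sum_range_succ
    (fun i j => PowerSeries.coeff i α⁻¹ * PowerSeries.coeff j α), PowerSeries.coeff_one] at hcoeff
  calc ∑ t ∈ Finset.range (s + r + 1), PowerSeries.coeff t α⁻¹ * B u ((e ^ (t + s)) w)
      = ∑ t ∈ Finset.range (r + 1), PowerSeries.coeff t α⁻¹ * PowerSeries.coeff (r - t) α := by
        refine (Finset.sum_subset (Finset.range_subset_range.2 (by omega)) fun t ht ht' => ?_).symm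
          |>.trans (Finset.sum_congr rfl fun t ht => ?_)
        · simp only [Finset.mem_range] at ht ht'
          rw [pow_apply_eq_zero_of_lt hw (by omega), map_zero, mul_zero]
        · simp only [Finset.mem_range] at ht
          rw [PowerSeries.coeff_mk, show s + r - (r - t) = t + s by omega]
    _ = if s = s + r then 1 else 0 := by rw [hcoeff]; simp

theorem apply_sum_smul_eq_of_apply_ne_zero {κ : Type*} [Fintype κ] {F G : κ → V}
    (hFG : ∀ p q, B (G p) (F q) ≠ 0 → p = q) (c : κ → k) (p : κ) :
    B (G p) (∑ q, c q • F q) = c p * B (G p) (F p) := by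
  rw [map_sum, Finset.sum_eq_single p (fun q _ hqp => ?_) (by simp), map_smul, smul_eq_mul]
  by_contra h
  exact hqp (hFG p q (right_ne_zero_of_mul (by simpa using h))).symm

def cyclicFamily (e : Module.End k V) {ι : Type*} (w : ι → V) (d : ι → ℕ)
    (p : Σ i, Fin (d i + 1)) : V :=
  (e ^ (p.2 : ℕ)) (w p.1)

def cyclicDual (e : Module.End k V) {ι : Type*} (w : ι → V) (d : ι → ℕ) (inv : ι → ι)
    (p : Σ i, Fin (d i + 1)) : V :=
  (e ^ (d p.1 - p.2)) (w (inv p.1))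

theorem pow_apply_mem_span_range_cyclicFamily {ι : Type*} {w : ι → V} {d : ι → ℕ} {i : ι}
    {s : ℕ} (hs : s ≤ d i) : (e ^ s) (w i) ∈ span k (Set.range (cyclicFamily e w d)) :=
  subset_span ⟨⟨i, ⟨s, by omega⟩⟩, rfl⟩

theorem span_range_cyclicFamily_mem_invtSubmodule {ι : Type*} {w : ι → V} {d : ι → ℕ}
    (hw : ∀ i, (e ^ (d i + 1)) (w i) = 0) :
    span k (Set.range (cyclicFamily e w d)) ∈ e.invtSubmodule := by
  refine (Module.End.mem_invtSubmodule _).2 (span_le.2 ?_)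
  rintro _ ⟨⟨i, t⟩, rfl⟩
  rw [SetLike.mem_coe, mem_comap, cyclicFamily, ← Module.End.mul_apply, ← pow_succ']
  rcases (Nat.lt_succ_iff.1 t.2).lt_or_eq with ht | ht
  · exact pow_apply_mem_span_range_cyclicFamily ht
  · rw [ht, hw]
    exact zero_mem _

theorem span_range_cyclicFamily_sumElim {ι₁ ι₂ : Type*} (w₁ : ι₁ → V) (w₂ : ι₂ → V)
    (d₁ : ι₁ → ℕ) (d₂ : ι₂ → ℕ) :
    span k (Set.range (cyclicFamily e (Sum.elim w₁ w₂) (Sum.elim d₁ d₂))) =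
      span k (Set.range (cyclicFamily e w₁ d₁)) ⊔ span k (Set.range (cyclicFamily e w₂ d₂)) := by
  have hrange : Set.range (cyclicFamily e (Sum.elim w₁ w₂) (Sum.elim d₁ d₂)) =
      Set.range (Sum.elim (cyclicFamily e w₁ d₁) (cyclicFamily e w₂ d₂)) := by
    ext v
    constructor
    · rintro ⟨⟨i | i, s⟩, rfl⟩
      exacts [⟨.inl ⟨i, s⟩, rfl⟩, ⟨.inr ⟨i, s⟩, rfl⟩]
    · rintro ⟨⟨i, s⟩ | ⟨i, s⟩, rfl⟩
      exacts [⟨⟨.inl i, s⟩, rfl⟩, ⟨⟨.inr i, s⟩, rfl⟩]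
  rw [hrange, Set.Sum.elim_range, span_union]

theorem span_range_cyclicFamily_comp_equiv {ι ι' : Type*} (w : ι → V) (d : ι → ℕ)
    (σ : ι' ≃ ι) :
    span k (Set.range (cyclicFamily e (w ∘ σ) (d ∘ σ))) =
      span k (Set.range (cyclicFamily e w d)) := by
  have : cyclicFamily e (w ∘ σ) (d ∘ σ) =
      cyclicFamily e w d ∘ Equiv.sigmaCongrLeft (β := fun i => Fin (d i + 1)) σ := rfl
  rw [this, (Equiv.surjective _).range_comp]

structure IsAdaptedCyclic (B : BilinForm k V) (e : Module.End k V) {ι : Type*} (w : ι → V)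
    (d : ι → ℕ) (inv : ι → ι) : Prop where
  pow_succ_apply_eq_zero : ∀ i, (e ^ (d i + 1)) (w i) = 0
  involutive : Function.Involutive inv
  inv_ne : ∀ i, inv i ≠ i
  d_inv : ∀ i, d (inv i) = d i
  eq_of_apply_pow_ne_zero : ∀ i j s, s ≤ d j → B (w i) ((e ^ s) (w j)) ≠ 0 → j = inv i ∧ s = d i
  apply_pow_ne_zero : ∀ i, B (w i) ((e ^ d i) (w (inv i))) ≠ 0

theorem isAdaptedCyclic_of_isEmpty {ι : Type*} [IsEmpty ι] (w : ι → V) (d : ι → ℕ)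
    (inv : ι → ι) : IsAdaptedCyclic B e w d inv :=
  ⟨isEmptyElim, isEmptyElim, isEmptyElim, isEmptyElim, isEmptyElim, isEmptyElim⟩

theorem isAdaptedCyclic_pair [NeZero (2 : k)] (hB : ∀ v w, B w v = -B v w)
    (he : IsAdjointPair B B e e) {d : ℕ} {x w : V} (hx : (e ^ (d + 1)) x = 0)
    (hw : (e ^ (d + 1)) w = 0) (hxw : ∀ s, B x ((e ^ s) w) = if s = d then 1 else 0) :
    IsAdaptedCyclic B e (fun b => bif b then w else x) (fun _ => d) not where
  pow_succ_apply_eq_zero b := by cases b <;> assumption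
  involutive := Bool.not_not
  inv_ne := Bool.not_ne_self
  d_inv _ := rfl
  eq_of_apply_pow_ne_zero b c s _ hne := by
    cases b <;> cases c <;> simp only [cond_true, cond_false] at hne
    · exact absurd (apply_pow_self_eq_zero hB he s x) hne
    · exact ⟨rfl, by by_contra hs; simp [hxw, hs] at hne⟩
    · exact ⟨rfl, by by_contra hs; simp [apply_pow_swap hB he s x w, hxw, hs] at hne⟩
    · exact absurd (apply_pow_self_eq_zero hB he s w) hne
  apply_pow_ne_zero b := by cases b <;> simp [apply_pow_swap hB he d x w, hxw]

namespace IsAdaptedCyclic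

variable {ι : Type*} {w : ι → V} {d : ι → ℕ} {inv : ι → ι}

theorem apply_cyclicDual_ne_zero_iff (h : IsAdaptedCyclic B e w d inv)
    (he : IsAdjointPair B B e e) (p q : Σ i, Fin (d i + 1)) :
    B (cyclicDual e w d inv p) (cyclicFamily e w d q) ≠ 0 ↔ p = q := by
  obtain ⟨i, t⟩ := p
  obtain ⟨j, s⟩ := q
  simp only [cyclicDual, cyclicFamily]
  rw [he.pow, ← Module.End.mul_apply, ← pow_add]
  constructor
  · intro hne
    have hle : d i - t + s ≤ d j := by
      by_contra! hlt
      exact hne (by rw [pow_apply_eq_zero_of_lt (h.pow_succ_apply_eq_zero j) hlt, map_zero])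
    obtain ⟨hj, hs⟩ := h.eq_of_apply_pow_ne_zero _ _ _ hle hne
    rw [h.involutive] at hj
    subst hj
    rw [h.d_inv] at hs
    rw [Fin.ext (by omega : (t : ℕ) = s)]
  · rintro ⟨⟩
    have := h.apply_pow_ne_zero (inv i)
    rwa [h.involutive, h.d_inv, ← Nat.sub_add_cancel (Nat.lt_succ_iff.1 t.2)] at this

theorem cyclicDual_mem_span (h : IsAdaptedCyclic B e w d inv) (p : Σ i, Fin (d i + 1)) :
    cyclicDual e w d inv p ∈ span k (Set.range (cyclicFamily e w d)) :=
  subset_span ⟨⟨inv p.1, ⟨d p.1 - p.2, by rw [h.d_inv]; omega⟩⟩, rfl⟩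

theorem comp_equiv {ι' : Type*} (h : IsAdaptedCyclic B e w d inv) (σ : ι' ≃ ι) :
    IsAdaptedCyclic B e (w ∘ σ) (d ∘ σ) (σ.symm ∘ inv ∘ σ) where
  pow_succ_apply_eq_zero i := h.pow_succ_apply_eq_zero (σ i)
  involutive i := by simp [h.involutive (σ i)]
  inv_ne i := by simpa [Equiv.symm_apply_eq] using h.inv_ne (σ i)
  d_inv i := by simpa using h.d_inv (σ i)
  eq_of_apply_pow_ne_zero i j s hs hne := by
    simpa [Equiv.eq_symm_apply] using h.eq_of_apply_pow_ne_zero (σ i) (σ j) s hs hne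
  apply_pow_ne_zero i := by simpa using h.apply_pow_ne_zero (σ i)

theorem sumElim (hB : B.IsRefl) {ι₁ ι₂ : Type*} {w₁ : ι₁ → V} {w₂ : ι₂ → V} {d₁ : ι₁ → ℕ}
    {d₂ : ι₂ → ℕ} {inv₁ : ι₁ → ι₁} {inv₂ : ι₂ → ι₂} (h₁ : IsAdaptedCyclic B e w₁ d₁ inv₁)
    (h₂ : IsAdaptedCyclic B e w₂ d₂ inv₂)
    (horth : span k (Set.range (cyclicFamily e w₂ d₂)) ≤
      B.orthogonal (span k (Set.range (cyclicFamily e w₁ d₁)))) :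
    IsAdaptedCyclic B e (Sum.elim w₁ w₂) (Sum.elim d₁ d₂) (Sum.map inv₁ inv₂) := by
  have hmem₁ (i : ι₁) : w₁ i ∈ span k (Set.range (cyclicFamily e w₁ d₁)) := by
    simpa using pow_apply_mem_span_range_cyclicFamily (e := e) (Nat.zero_le (d₁ i))
  have hmem₂ (i : ι₂) : w₂ i ∈ span k (Set.range (cyclicFamily e w₂ d₂)) := by
    simpa using pow_apply_mem_span_range_cyclicFamily (e := e) (Nat.zero_le (d₂ i))
  refine ⟨?_, ?_, ?_, ?_, ?_, ?_⟩
  · rintro (i | i)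
    exacts [h₁.pow_succ_apply_eq_zero i, h₂.pow_succ_apply_eq_zero i]
  · rintro (i | i)
    exacts [congrArg Sum.inl (h₁.involutive i), congrArg Sum.inr (h₂.involutive i)]
  · rintro (i | i)
    exacts [fun h => h₁.inv_ne i (Sum.inl_injective h),
      fun h => h₂.inv_ne i (Sum.inr_injective h)]
  · rintro (i | i)
    exacts [h₁.d_inv i, h₂.d_inv i]
  · rintro (i | i) (j | j) s hs hne
    · obtain ⟨rfl, rfl⟩ := h₁.eq_of_apply_pow_ne_zero i j s hs hne
      exact ⟨rfl, rfl⟩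
    · exact absurd (horth (pow_apply_mem_span_range_cyclicFamily hs) _ (hmem₁ i)) hne
    · exact absurd (hB _ _ (horth (hmem₂ i) _ (pow_apply_mem_span_range_cyclicFamily hs))) hne
    · obtain ⟨rfl, rfl⟩ := h₂.eq_of_apply_pow_ne_zero i j s hs hne
      exact ⟨rfl, rfl⟩
  · rintro (i | i)
    exacts [h₁.apply_pow_ne_zero i, h₂.apply_pow_ne_zero i]

variable [Fintype ι]

theorem eq_zero_of_apply_cyclicDual_sum_eq_zero (h : IsAdaptedCyclic B e w d inv)
    (he : IsAdjointPair B B e e) {c : (Σ i, Fin (d i + 1)) → k} {p : Σ i, Fin (d i + 1)}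
    (hp : B (cyclicDual e w d inv p) (∑ q, c q • cyclicFamily e w d q) = 0) : c p = 0 := by
  rw [apply_sum_smul_eq_of_apply_ne_zero (fun p q => (h.apply_cyclicDual_ne_zero_iff he p q).1)]
    at hp
  exact (mul_eq_zero.1 hp).resolve_right ((h.apply_cyclicDual_ne_zero_iff he p p).2 rfl)

theorem linearIndependent (h : IsAdaptedCyclic B e w d inv) (he : IsAdjointPair B B e e) :
    LinearIndependent k (cyclicFamily e w d) :=
  Fintype.linearIndependent_iff.2 fun _ hc _ =>
    h.eq_zero_of_apply_cyclicDual_sum_eq_zero he (by rw [hc, map_zero])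

theorem disjoint_orthogonal (h : IsAdaptedCyclic B e w d inv) (he : IsAdjointPair B B e e) :
    Disjoint (span k (Set.range (cyclicFamily e w d)))
      (B.orthogonal (span k (Set.range (cyclicFamily e w d)))) := by
  refine disjoint_def.2 fun x hx hxo => ?_
  obtain ⟨c, rfl⟩ := (mem_span_range_iff_exists_fun k).1 hx
  have hc : ∀ p, c p = 0 := fun p =>
    h.eq_zero_of_apply_cyclicDual_sum_eq_zero he (hxo _ (h.cyclicDual_mem_span p))
  simp [hc]

theorem ker_eq_span (h : IsAdaptedCyclic B e w d inv) (he : IsAdjointPair B B e e)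
    (hspan : span k (Set.range (cyclicFamily e w d)) = ⊤) :
    LinearMap.ker e = span k (Set.range fun i => (e ^ d i) (w i)) := by
  refine le_antisymm (fun x hx => ?_) (span_le.2 ?_)
  · obtain ⟨c, rfl⟩ := (mem_span_range_iff_exists_fun k).1 (hspan ▸ mem_top : x ∈ _)
    refine sum_mem fun q _ => ?_
    obtain ⟨i, t⟩ := q
    by_cases ht : (t : ℕ) = d i
    · exact smul_mem _ _ (subset_span ⟨i, by simp [cyclicFamily, ht]⟩)
    -- below the top of its string, the dual vector lies in the range of `e`, so it pairs to 0
    obtain ⟨n, hn⟩ : ∃ n, d i - t = n + 1 := Nat.exists_eq_add_one.2 (by omega)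
    have hc : c ⟨i, t⟩ = 0 := h.eq_zero_of_apply_cyclicDual_sum_eq_zero he <| by
      rw [cyclicDual, hn, pow_succ', Module.End.mul_apply, he, LinearMap.mem_ker.1 hx, map_zero]
    rw [hc, zero_smul]
    exact zero_mem _
  · rintro _ ⟨i, rfl⟩
    rw [SetLike.mem_coe, LinearMap.mem_ker, ← Module.End.mul_apply, ← pow_succ',
      h.pow_succ_apply_eq_zero]

theorem card_eq_finrank_ker [FiniteDimensional k V] (h : IsAdaptedCyclic B e w d inv)
    (he : IsAdjointPair B B e e) (hspan : span k (Set.range (cyclicFamily e w d)) = ⊤) :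
    Fintype.card ι = finrank k (LinearMap.ker e) := by
  rw [h.ker_eq_span he hspan, finrank_span_eq_card]
  exact (h.linearIndependent he).comp (fun i => ⟨i, Fin.last (d i)⟩) fun i j hij =>
    congrArg Sigma.fst hij

end IsAdaptedCyclic

theorem orthogonal_mem_invtSubmodule (he : IsAdjointPair B B e e) {U : Submodule k V}
    (hU : U ∈ e.invtSubmodule) : B.orthogonal U ∈ e.invtSubmodule :=
  fun x hx u hu => by rw [← he]; exact hx _ (hU hu)

theorem sup_inf_orthogonal_eq [FiniteDimensional k V] (hB : B.IsRefl) {U W : Submodule k V}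
    (hUW : U ≤ W) (hU : Disjoint U (B.orthogonal U)) : U ⊔ W ⊓ B.orthogonal U = W := by
  rw [inf_comm, ← sup_inf_assoc_of_le _ hUW,
    ((B.isCompl_orthogonal_iff_disjoint hB).2 hU).sup_eq_top, top_inf_eq]

theorem disjoint_inf_orthogonal {U W : Submodule k V} (hW : Disjoint W (B.orthogonal W))
    (hsup : U ⊔ W ⊓ B.orthogonal U = W) :
    Disjoint (W ⊓ B.orthogonal U) (B.orthogonal (W ⊓ B.orthogonal U)) := by
  refine disjoint_def.2 fun x hx hxo => disjoint_def.1 hW x (mem_inf.1 hx).1 fun n hn => ?_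
  rw [← hsup] at hn
  obtain ⟨u, hu, y, hy, rfl⟩ := mem_sup.1 hn
  rw [map_add, LinearMap.add_apply, (mem_inf.1 hx).2 u hu, hxo y hy, add_zero]

theorem exists_isAdaptedCyclic_pair [NeZero (2 : k)] (hB : ∀ v w, B w v = -B v w)
    (he : IsAdjointPair B B e e) (hnil : IsNilpotent e) {W : Submodule k V}
    (hWe : W ∈ e.invtSubmodule) (hW : Disjoint W (B.orthogonal W)) (hWbot : W ≠ ⊥) :
    ∃ (w : Bool → V) (d : ℕ), IsAdaptedCyclic B e w (fun _ => d) not ∧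
      span k (Set.range (cyclicFamily e w fun _ => d)) ≤ W := by
  obtain ⟨d, ⟨w, hwW, hw⟩, hdW⟩ := exists_pow_apply_ne_zero_of_ne_bot hnil hWbot
  obtain ⟨u, huW, huw⟩ : ∃ u ∈ W, B u ((e ^ d) w) ≠ 0 := by
    by_contra! h
    exact hw (disjoint_def.1 hW _ (pow_apply_mem_of_mem_invtSubmodule hWe d hwW) h)
  obtain ⟨x, hxW, hxw⟩ := exists_mem_apply_pow_eq_ite he hWe huW (hdW w hwW) huw
  refine ⟨_, d, isAdaptedCyclic_pair hB he (hdW x hxW) (hdW w hwW) hxw, span_le.2 ?_⟩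
  rintro _ ⟨⟨b, s⟩, rfl⟩
  cases b
  exacts [pow_apply_mem_of_mem_invtSubmodule hWe _ hxW,
    pow_apply_mem_of_mem_invtSubmodule hWe _ hwW]

theorem exists_isAdaptedCyclic [FiniteDimensional k V] [NeZero (2 : k)]
    (hB : ∀ v w, B w v = -B v w) (he : IsAdjointPair B B e e) (hnil : IsNilpotent e)
    (W : Submodule k V) (hWe : W ∈ e.invtSubmodule) (hW : Disjoint W (B.orthogonal W)) :
    ∃ (ι : Type) (_ : Fintype ι) (w : ι → V) (d : ι → ℕ) (inv : ι → ι),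
      IsAdaptedCyclic B e w d inv ∧ span k (Set.range (cyclicFamily e w d)) = W := by
  have hBrefl : B.IsRefl := fun v w h => by rw [hB, h, neg_zero]
  induction hn : finrank k W using Nat.strong_induction_on generalizing W with
  | _ n ih =>
  rcases eq_or_ne W ⊥ with rfl | hWbot
  · exact ⟨Empty, inferInstance, Empty.elim, Empty.elim, Empty.elim,
      isAdaptedCyclic_of_isEmpty _ _ _, by simp⟩
  obtain ⟨w₁, d₁, h₁, hUW⟩ := exists_isAdaptedCyclic_pair hB he hnil hWe hW hWbot
  set U := span k (Set.range (cyclicFamily e w₁ fun _ => d₁))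
  have hsup : U ⊔ W ⊓ B.orthogonal U = W :=
    sup_inf_orthogonal_eq hBrefl hUW (h₁.disjoint_orthogonal he)
  have hlt : W ⊓ B.orthogonal U < W := by
    refine lt_of_le_of_ne inf_le_left fun heq => ?_
    have hUbot : U = ⊥ := (h₁.disjoint_orthogonal he).eq_bot_of_le
      ((heq.symm ▸ hUW).trans inf_le_right)
    exact (h₁.linearIndependent he).ne_zero ⟨false, 0⟩
      ((mem_bot k).1 (hUbot ▸ subset_span ⟨_, rfl⟩))
  obtain ⟨ι, _, w₂, d₂, inv₂, h₂, hW'⟩ := ih _ (hn ▸ finrank_lt_finrank_of_lt hlt) _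
    (Module.End.invtSubmodule.inf_mem hWe (orthogonal_mem_invtSubmodule he
      (span_range_cyclicFamily_mem_invtSubmodule h₁.pow_succ_apply_eq_zero)))
    (disjoint_inf_orthogonal hW hsup) rfl
  refine ⟨Bool ⊕ ι, inferInstance, Sum.elim w₁ w₂, Sum.elim (fun _ => d₁) d₂, Sum.map not inv₂,
    h₁.sumElim hBrefl h₂ (hW' ▸ inf_le_right), ?_⟩
  rw [span_range_cyclicFamily_sumElim, hW', hsup]

end AdaptedCyclic

theorem adapted_cyclic_vectors_symplectic_general
    {k V : Type*} [Field k] [CharZero k]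
    [AddCommGroup V] [Module k V] [FiniteDimensional k V]
    (B : V →ₗ[k] V →ₗ[k] k)
    (hBnd : ∀ v : V, (∀ w : V, B v w = 0) → v = 0)
    (hBalt : ∀ v w : V, B w v = -B v w)
    (e : Module.End k V) (hnil : IsNilpotent e)
    (he : ∀ v w : V, B (e v) w = B v (e w)) :
    ∃ (m : ℕ), m = finrank k ↥(LinearMap.ker e) ∧
    ∃ (w : Fin m → V) (d : Fin m → ℕ) (inv : Fin m → Fin m),
      (∀ i, (e ^ (d i + 1)) (w i) = 0) ∧
      LinearIndependent k
        (fun p : Σ i : Fin m, Fin (d i + 1) => (e ^ (p.2 : ℕ)) (w p.1)) ∧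
      Submodule.span k
        (Set.range fun p : Σ i : Fin m, Fin (d i + 1) => (e ^ (p.2 : ℕ)) (w p.1)) = ⊤ ∧
      (∀ i, inv (inv i) = i) ∧
      (∀ i, inv i ≠ i) ∧
      (∀ i, d (inv i) = d i) ∧
      (∀ i j : Fin m, ∀ s : ℕ, s ≤ d j →
        B (w i) ((e ^ s) (w j)) ≠ 0 → j = inv i ∧ s = d i) ∧
      (∀ i, B (w i) ((e ^ d i) (w (inv i))) ≠ 0) := by
  have hB : Disjoint ⊤ (LinearMap.BilinForm.orthogonal B ⊤) :=
    Submodule.disjoint_def.2 fun x _ hx =>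
      hBnd x fun w => by rw [hBalt w x, hx w Submodule.mem_top, neg_zero]
  obtain ⟨ι, _, w, d, inv, h, hspan⟩ :=
    exists_isAdaptedCyclic hBalt he hnil ⊤ (Module.End.invtSubmodule.top_mem e) hB
  set σ := (Fintype.equivFinOfCardEq (h.card_eq_finrank_ker he hspan)).symm
  have hσ := h.comp_equiv σ
  exact ⟨_, rfl, w ∘ σ, d ∘ σ, σ.symm ∘ inv ∘ σ, hσ.pow_succ_apply_eq_zero,
    hσ.linearIndependent he, (span_range_cyclicFamily_comp_equiv w d σ).trans hspan,
    hσ.involutive, hσ.inv_ne, hσ.d_inv, hσ.eq_of_apply_pow_ne_zero, hσ.apply_pow_ne_zero⟩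

theorem adapted_cyclic_vectors_symplectic
    {k V : Type*} [Field k] [IsAlgClosed k] [CharZero k]
    [AddCommGroup V] [Module k V] [FiniteDimensional k V]
    (B : V →ₗ[k] V →ₗ[k] k)
    (hBnd : ∀ v : V, (∀ w : V, B v w = 0) → v = 0)
    (hBalt : ∀ v w : V, B w v = -B v w)
    (e : Module.End k V) (hnil : IsNilpotent e)
    (he : ∀ v w : V, B (e v) w = B v (e w)) :
    ∃ (m : ℕ), m = finrank k ↥(LinearMap.ker e) ∧
    ∃ (w : Fin m → V) (d : Fin m → ℕ) (inv : Fin m → Fin m),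
      (∀ i, (e ^ (d i + 1)) (w i) = 0) ∧
      LinearIndependent k
        (fun p : Σ i : Fin m, Fin (d i + 1) => (e ^ (p.2 : ℕ)) (w p.1)) ∧
      Submodule.span k
        (Set.range fun p : Σ i : Fin m, Fin (d i + 1) => (e ^ (p.2 : ℕ)) (w p.1)) = ⊤ ∧
      (∀ i, inv (inv i) = i) ∧
      (∀ i, inv i ≠ i) ∧
      (∀ i, d (inv i) = d i) ∧
      (∀ i j : Fin m, ∀ s : ℕ, s ≤ d j →
        B (w i) ((e ^ s) (w j)) ≠ 0 → j = inv i ∧ s = d i) ∧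
      (∀ i, B (w i) ((e ^ d i) (w (inv i))) ≠ 0) :=
  adapted_cyclic_vectors_symplectic_general B hBnd hBalt e hnil he
end
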